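/- arXiv:math/0312191 — 6 statements merged into one kernel-verified Lean document; each statement's English description precedes it below -/
import Mathlib

section
/- Let P be a complex polynomial with n distinct roots α₁,…,αₙ, and let z ∈ ℂ with P'(z) ≠ 0. Then there exists a root α of P such that |z − α| ≤ n·|P(z)/P'(z)|. -/
/-! Over the roots r of a split polynomial f, with multiplicity, f'(z)/f(z) = Σ 1/(z - r).
If a is the root nearest to z, each term has norm at most 1/‖z - a‖, so
‖f'(z)/f(z)‖ ≤ (number of roots)/‖z - a‖, which rearranges to the bound. -/

open Polynomial

theorem Multiset.norm_sum_map_one_div_sub_le {K : Type*} [NormedField K] (s : Multiset K)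
    (z : K) {m : ℝ} (hm : 0 < m) (h : ∀ r ∈ s, m ≤ ‖z - r‖) :
    ‖(s.map fun r ↦ 1 / (z - r)).sum‖ ≤ s.card / m := by
  calc ‖(s.map fun r ↦ 1 / (z - r)).sum‖
      ≤ (s.map fun r ↦ ‖1 / (z - r)‖).sum := by
        simpa only [Multiset.map_map, Function.comp_def] using
          norm_multiset_sum_le (s.map fun r ↦ 1 / (z - r))
    _ ≤ (s.map fun r ↦ ‖1 / (z - r)‖).card • (1 / m) := by
        refine Multiset.sum_le_card_nsmul _ _ ?_
        simp only [Multiset.mem_map]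
        rintro _ ⟨r, hr, rfl⟩
        rw [norm_div, norm_one]
        exact one_div_le_one_div_of_le hm (h r hr)
    _ = s.card / m := by rw [Multiset.card_map, nsmul_eq_mul, mul_one_div]

theorem Polynomial.Splits.exists_mem_roots_norm_sub_le {K : Type*} [NormedField K] {f : K[X]}
    (hf : f.Splits) {z : K} (hz : f.derivative.eval z ≠ 0) :
    ∃ a ∈ f.roots, ‖z - a‖ ≤ f.roots.card * ‖f.eval z / f.derivative.eval z‖ := by
  have hf0 : f ≠ 0 := by rintro rfl; simp at hz
  by_cases hfz : f.eval z = 0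
  · exact ⟨z, (mem_roots hf0).2 hfz, by simp [hfz]⟩
  have hderiv := hf.eval_derivative_eq_eval_mul_sum hfz
  have hroots : f.roots ≠ 0 := fun h ↦ hz (by simpa [h] using hderiv)
  obtain ⟨a, ha, hmin⟩ := Multiset.exists_min_image (fun r ↦ ‖z - r‖) hroots
  have hpos : 0 < ‖z - a‖ := by
    refine norm_pos_iff.2 (sub_ne_zero.2 ?_)
    rintro rfl
    exact hfz ((mem_roots hf0).1 ha)
  refine ⟨a, ha, ?_⟩
  have hsum := f.roots.norm_sum_map_one_div_sub_le z hpos hmin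
  rw [norm_div, mul_div_assoc', le_div_iff₀ (norm_pos_iff.2 hz), hderiv, norm_mul]
  calc ‖z - a‖ * (‖f.eval z‖ * ‖(f.roots.map fun r ↦ 1 / (z - r)).sum‖)
      ≤ ‖z - a‖ * (‖f.eval z‖ * (f.roots.card / ‖z - a‖)) := by gcongr
    _ = f.roots.card * ‖f.eval z‖ := by field_simp

theorem newton_root_bound_general (n : ℕ) (c : ℂ) (α : Fin n → ℂ)
    (P : Polynomial ℂ)
    (hP : P = C c * ∏ i, (X - C (α i))) (z : ℂ)
    (hz : (derivative P).eval z ≠ 0) :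
    ∃ i : Fin n,
      ‖z - α i‖ ≤ n * ‖P.eval z / (derivative P).eval z‖ := by
  have hc : c ≠ 0 := by rintro rfl; simp [hP] at hz
  have hroots : P.roots = Finset.univ.val.map α := by
    rw [hP, roots_C_mul _ hc, ← roots_multiset_prod_X_sub_C (Finset.univ.val.map α),
      Finset.prod_eq_multiset_prod, Multiset.map_map]
    rfl
  obtain ⟨a, ha, hbound⟩ := (IsAlgClosed.splits P).exists_mem_roots_norm_sub_le hz
  obtain ⟨i, -, rfl⟩ := Multiset.mem_map.1 (hroots ▸ ha)
  exact ⟨i, by simpa [hroots] using hbound⟩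

/-- If P ∈ ℂ[X] has n distinct roots α₁,…,αₙ (i.e. P = c·∏(X - αᵢ) with c ≠ 0
and the αᵢ distinct) and z ∈ ℂ satisfies P'(z) ≠ 0, then some root α satisfies
|z - α| ≤ n·|P(z)/P'(z)|. -/
theorem newton_root_bound (n : ℕ) (c : ℂ) (hc : c ≠ 0) (α : Fin n → ℂ)
    (hα : Function.Injective α) (P : Polynomial ℂ)
    (hP : P = C c * ∏ i, (X - C (α i))) (z : ℂ)
    (hz : (derivative P).eval z ≠ 0) :
    ∃ i : Fin n,
      ‖z - α i‖ ≤ n * ‖P.eval z / (derivative P).eval z‖ :=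
  newton_root_bound_general n c α P hP z hz
end

section
/- In the group presented by generators s, t, u and relations stst = tsts, susu = usus, tutu = utut, stustus = tustust, and tustust = ustustu, the element (stu)^7 is central. -/
/-!
Put `Δ = stustus`. The relations `stustus = tustust = ustustu` say that `Δ` equals its cyclic
rotations, so conjugation by `Δ` permutes the generators cyclically (`t ↦ s ↦ u ↦ t`) and `Δ³`
is central. Moreover `(stu)² = u⁻¹Δ`, and pushing the `u⁻¹`'s through `Δ` gives `(stu)⁷ = Δ³`.
-/

theorem semiconjBy_of_eq_rotate {S : Type*} [Semigroup S] {a b e : S}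
    (h : a * b * e * a * b * e * a = b * e * a * b * e * a * b) :
    SemiconjBy (a * b * e * a * b * e * a) b a :=
  calc a * b * e * a * b * e * a * b = a * (b * e * a * b * e * a * b) := by
        simp only [mul_assoc]
    _ = a * (a * b * e * a * b * e * a) := by rw [h]

theorem commute_pow_three_of_semiconjBy {M : Type*} [Monoid M] {d a b e : M}
    (hb : SemiconjBy d b a) (he : SemiconjBy d e b) (ha : SemiconjBy d a e) :
    Commute (d ^ 3) a := by
  rw [pow_three]
  exact hb.mul_left (he.mul_left ha)

theorem pow_seven_eq_pow_three_of_semiconjBy {G : Type*} [Group G] {d a b e : G}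
    (hd : d = e * (a * b * e) * (a * b * e)) (hb : SemiconjBy d b a) (he : SemiconjBy d e b) :
    (a * b * e) ^ 7 = d ^ 3 :=
  calc (a * b * e) ^ 7 = a * b * (d * e⁻¹) * (d * e⁻¹) * d := by
        rw [hd]; simp only [pow_succ, pow_zero, one_mul]; group
    _ = a * b * (b⁻¹ * d) * (b⁻¹ * d) * d := by rw [he.inv_right.eq]
    _ = a * (d * b⁻¹) * d * d := by group
    _ = d ^ 3 := by rw [hb.inv_right.eq, pow_three']; group

theorem G24_center_general (G : Type*) [Group G] (s t u : G)
    (h4 : s*t*u*s*t*u*s = t*u*s*t*u*s*t)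
    (h5 : t*u*s*t*u*s*t = u*s*t*u*s*t*u) :
    Commute ((s*t*u)^7) s ∧ Commute ((s*t*u)^7) t ∧ Commute ((s*t*u)^7) u := by
  have hts : SemiconjBy (s*t*u*s*t*u*s) t s := semiconjBy_of_eq_rotate h4
  have hut : SemiconjBy (s*t*u*s*t*u*s) u t := h4 ▸ semiconjBy_of_eq_rotate h5
  have hsu : SemiconjBy (s*t*u*s*t*u*s) s u :=
    (h4.trans h5) ▸ semiconjBy_of_eq_rotate (h4.trans h5).symm
  rw [pow_seven_eq_pow_three_of_semiconjBy (by rw [h4, h5]; group) hts hut]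
  exact ⟨commute_pow_three_of_semiconjBy hts hut hsu, commute_pow_three_of_semiconjBy hut hsu hts,
    commute_pow_three_of_semiconjBy hsu hts hut⟩

/-- In the group ⟨s,t,u | stst=tsts, susu=usus, tutu=utut,
stustus=tustust=ustustu⟩ (the braid group of G₂₄), the element (stu)^7 is
central, i.e. it commutes with each generator. -/
theorem G24_center (G : Type*) [Group G] (s t u : G)
    (h1 : s*t*s*t = t*s*t*s)
    (h2 : s*u*s*u = u*s*u*s)
    (h3 : t*u*t*u = u*t*u*t)
    (h4 : s*t*u*s*t*u*s = t*u*s*t*u*s*t)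
    (h5 : t*u*s*t*u*s*t = u*s*t*u*s*t*u) :
    Commute ((s*t*u)^7) s ∧ Commute ((s*t*u)^7) t ∧ Commute ((s*t*u)^7) u :=
  G24_center_general G s t u h4 h5
end

section
/- In the group presented by generators s, t, u and relations stst = tsts, tut = utu, sus = usu, and stustustusts = tstustustust, the element (stu)^5 is central. -/
/-- In ⟨s,t,u | stst=tsts, tut=utu, sus=usu, stustustusts=tstustustust⟩
(first presentation of the braid group of G₂₇), (stu)^5 is central. -/
theorem G27_center_first (G : Type*) [Group G] (s t u : G)
    (h1 : s*t*s*t = t*s*t*s)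
    (h2 : t*u*t = u*t*u)
    (h3 : s*u*s = u*s*u)
    (h4 : s*t*u*s*t*u*s*t*u*s*t*s = t*s*t*u*s*t*u*s*t*u*s*t) :
    Commute ((s*t*u)^5) s ∧ Commute ((s*t*u)^5) t ∧ Commute ((s*t*u)^5) u := by
  have r1 : ∀ x : G, s * (t * (s * (t * x))) = t * (s * (t * (s * x))) := by
    intro x; simp only [← mul_assoc]; rw [h1]
  have r2 : ∀ x : G, t * (u * (t * x)) = u * (t * (u * x)) := by
    intro x; simp only [← mul_assoc]; rw [h2]
  have r3 : ∀ x : G, s * (u * (s * x)) = u * (s * (u * x)) := by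
    intro x; simp only [← mul_assoc]; rw [h3]
  have r4 : ∀ x : G,
      s * (t * (u * (s * (t * (u * (s * (t * (u * (s * (t * (s * x))))))))))) =
      t * (s * (t * (u * (s * (t * (u * (s * (t * (u * (s * (t * x))))))))))) := by
    intro x; simp only [← mul_assoc]; rw [h4]
  have key_t : ∀ x : G, s * (t * (u * (s * (t * (u * (s * (t * (u * (s * (t * (u * (s * (t * (u * (t * (x)))))))))))))))) = t * (s * (t * (u * (s * (t * (u * (s * (t * (u * (s * (t * (u * (s * (t * (u * (x)))))))))))))))) := by
    intro x
    conv_lhs => rw [r2 x]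
    conv_lhs => rw [← r3 (t * (u * (x)))]
    conv_lhs => rw [r4 (u * (s * (t * (u * (x)))))]

  have key_s : ∀ x : G, s * (t * (u * (s * (t * (u * (s * (t * (u * (s * (t * (u * (s * (t * (u * (s * (t * (s * (t * (x))))))))))))))))))) = s * (s * (t * (u * (s * (t * (u * (s * (t * (u * (s * (t * (u * (s * (t * (u * (t * (s * (t * (x))))))))))))))))))) := by
    intro x
    conv_lhs => rw [r1 x]
    conv_lhs => rw [r2 (s * (t * (s * (x))))]
    conv_lhs => rw [← r3 (t * (u * (s * (t * (s * (x))))))]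
    conv_lhs => rw [r4 (u * (s * (t * (u * (s * (t * (s * (x))))))))]
    conv_lhs => rw [r4 x]
    conv_lhs => rw [r2 (s * (t * (u * (s * (t * (u * (s * (t * (u * (s * (t * (x))))))))))))]
    conv_lhs => rw [← r3 (t * (u * (s * (t * (u * (s * (t * (u * (s * (t * (u * (s * (t * (x))))))))))))))]
    conv_lhs => rw [← r1 (u * (s * (t * (u * (s * (t * (u * (s * (t * (u * (s * (t * (u * (s * (t * (x))))))))))))))))]
    conv_lhs => rw [← r4 (u * (s * (t * (u * (s * (t * (x)))))))]
    conv_lhs => rw [r3 (t * (u * (s * (t * (x)))))]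
    conv_lhs => rw [← r2 (s * (t * (x)))]

  have et : (s*t*u)^5 * t = t * (s*t*u)^5 := by
    have h := key_t 1
    simp only [mul_one] at h
    simp only [pow_succ, pow_zero, one_mul, mul_assoc]
    exact h
  have es : (s*t*u)^5 * s = s * (s*t*u)^5 := by
    have h := key_s 1
    simp only [mul_one] at h
    have h2 : ((s*t*u)^5 * s) * (t*(s*t)) = (s * (s*t*u)^5) * (t*(s*t)) := by
      simp only [pow_succ, pow_zero, one_mul, mul_assoc]
      exact h
    exact mul_right_cancel h2
  have ew : (s*t*u)^5 * (s*t*u) = (s*t*u) * (s*t*u)^5 :=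
    ((Commute.refl (s*t*u)).pow_left 5).eq
  have eu : (s*t*u)^5 * u = u * (s*t*u)^5 := by
    have h' : s * (t * ((s*t*u)^5 * u)) = s * (t * (u * (s*t*u)^5)) := by
      calc s * (t * ((s*t*u)^5 * u)) = s * ((t * (s*t*u)^5) * u) := by
            simp only [mul_assoc]
        _ = s * (((s*t*u)^5 * t) * u) := by rw [et]
        _ = (s * (s*t*u)^5) * (t * u) := by simp only [mul_assoc]
        _ = ((s*t*u)^5 * s) * (t * u) := by rw [es]
        _ = (s*t*u)^5 * (s*t*u) := by simp only [mul_assoc]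
        _ = (s*t*u) * (s*t*u)^5 := ew
        _ = s * (t * (u * (s*t*u)^5)) := by simp only [mul_assoc]
    exact mul_left_cancel (mul_left_cancel h')
  exact ⟨es, et, eu⟩
end

section
/- In the group presented by generators s, t, u and relations ststs = tstst, tutu = utut, sus = usu, and stustut = ustustu, the element (stu)^5 is central. -/
/-- In ⟨s,t,u | ststs=tstst, tutu=utut, sus=usu, stustut=ustustu⟩
(third presentation of the braid group of G₂₇), (stu)^5 is central. -/
theorem G27_center_third (G : Type*) [Group G] (s t u : G)
    (h1 : s*t*s*t*s = t*s*t*s*t)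
    (h2 : t*u*t*u = u*t*u*t)
    (h3 : s*u*s = u*s*u)
    (h4 : s*t*u*s*t*u*t = u*s*t*u*s*t*u) :
    Commute ((s*t*u)^5) s ∧ Commute ((s*t*u)^5) t ∧ Commute ((s*t*u)^5) u := by
  have h1x : ∀ x : G, s*(t*(s*(t*(s*x)))) = t*(s*(t*(s*(t*x)))) := by
    intro x; simp only [← mul_assoc]; rw [h1]
  have h2x : ∀ x : G, t*(u*(t*(u*x))) = u*(t*(u*(t*x))) := by
    intro x; simp only [← mul_assoc]; rw [h2]
  have h3x : ∀ x : G, s*(u*(s*x)) = u*(s*(u*x)) := by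
    intro x; simp only [← mul_assoc]; rw [h3]
  have h4x : ∀ x : G, s*(t*(u*(s*(t*(u*(t*x)))))) = u*(s*(t*(u*(s*(t*(u*x)))))) := by
    intro x; simp only [← mul_assoc]; rw [h4]
  have h1' : s*(t*(s*(t*s))) = t*(s*(t*(s*t))) := by simp only [← mul_assoc]; rw [h1]
  have h2' : t*(u*(t*u)) = u*(t*(u*t)) := by simp only [← mul_assoc]; rw [h2]
  have h3' : s*(u*s) = u*(s*u) := by simp only [← mul_assoc]; rw [h3]
  have h4' : s*(t*(u*(s*(t*(u*t))))) = u*(s*(t*(u*(s*(t*u))))) := by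
    simp only [← mul_assoc]; rw [h4]
  have keyt : t*(s*(t*(u*(s*(t*(u*(s*(t*(u*(s*(t*(u*(s*(t*(u))))))))))))))) = s*(t*(u*(s*(t*(u*(s*(t*(u*(s*(t*(u*(s*(t*(u*(t))))))))))))))) := by
    calc t*(s*(t*(u*(s*(t*(u*(s*(t*(u*(s*(t*(u*(s*(t*(u)))))))))))))))
      _ = t*(s*(t*(s*(t*(u*(s*(t*(u*(t*(s*(t*(u*(s*(t*(u))))))))))))))) := congrArg (t * ·) (congrArg (s * ·) (congrArg (t * ·) ((h4x _).symm)))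
      _ = s*(t*(s*(t*(s*(u*(s*(t*(u*(t*(s*(t*(u*(s*(t*(u))))))))))))))) := (h1x _).symm
      _ = s*(t*(s*(t*(u*(s*(u*(t*(u*(t*(s*(t*(u*(s*(t*(u))))))))))))))) := congrArg (s * ·) (congrArg (t * ·) (congrArg (s * ·) (congrArg (t * ·) (h3x _))))
      _ = s*(t*(s*(t*(u*(s*(t*(u*(t*(u*(s*(t*(u*(s*(t*(u))))))))))))))) := congrArg (s * ·) (congrArg (t * ·) (congrArg (s * ·) (congrArg (t * ·) (congrArg (u * ·) (congrArg (s * ·) ((h2x _).symm))))))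
      _ = s*(t*(u*(s*(t*(u*(s*(t*(u*(u*(s*(t*(u*(s*(t*(u))))))))))))))) := congrArg (s * ·) (congrArg (t * ·) (h4x _))
      _ = s*(t*(u*(s*(t*(u*(s*(t*(u*(s*(t*(u*(s*(t*(u*(t))))))))))))))) := congrArg (s * ·) (congrArg (t * ·) (congrArg (u * ·) (congrArg (s * ·) (congrArg (t * ·) (congrArg (u * ·) (congrArg (s * ·) (congrArg (t * ·) (congrArg (u * ·) ((h4' ).symm)))))))))
  have keyu : u*(s*(t*(u*(s*(t*(u*(s*(t*(u*(s*(t*(u*(s*(t*(u))))))))))))))) = s*(t*(u*(s*(t*(u*(s*(t*(u*(s*(t*(u*(s*(t*(u*(u))))))))))))))) := by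
    calc u*(s*(t*(u*(s*(t*(u*(s*(t*(u*(s*(t*(u*(s*(t*(u)))))))))))))))
      _ = u*(s*(t*(u*(s*(t*(u*(s*(t*(s*(t*(u*(s*(t*(u*(t))))))))))))))) := congrArg (u * ·) (congrArg (s * ·) (congrArg (t * ·) (congrArg (u * ·) (congrArg (s * ·) (congrArg (t * ·) (congrArg (u * ·) (congrArg (s * ·) (congrArg (t * ·) ((h4' ).symm)))))))))
      _ = s*(t*(u*(s*(t*(u*(t*(s*(t*(s*(t*(u*(s*(t*(u*(t))))))))))))))) := (h4x _).symm
      _ = s*(t*(u*(s*(t*(u*(s*(t*(s*(t*(s*(u*(s*(t*(u*(t))))))))))))))) := congrArg (s * ·) (congrArg (t * ·) (congrArg (u * ·) (congrArg (s * ·) (congrArg (t * ·) (congrArg (u * ·) ((h1x _).symm))))))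
      _ = s*(t*(u*(s*(t*(u*(s*(t*(s*(t*(u*(s*(u*(t*(u*(t))))))))))))))) := congrArg (s * ·) (congrArg (t * ·) (congrArg (u * ·) (congrArg (s * ·) (congrArg (t * ·) (congrArg (u * ·) (congrArg (s * ·) (congrArg (t * ·) (congrArg (s * ·) (congrArg (t * ·) (h3x _))))))))))
      _ = s*(t*(u*(s*(t*(u*(s*(t*(s*(t*(u*(s*(t*(u*(t*(u))))))))))))))) := congrArg (s * ·) (congrArg (t * ·) (congrArg (u * ·) (congrArg (s * ·) (congrArg (t * ·) (congrArg (u * ·) (congrArg (s * ·) (congrArg (t * ·) (congrArg (s * ·) (congrArg (t * ·) (congrArg (u * ·) (congrArg (s * ·) ((h2' ).symm))))))))))))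
      _ = s*(t*(u*(s*(t*(u*(s*(t*(u*(s*(t*(u*(s*(t*(u*(u))))))))))))))) := congrArg (s * ·) (congrArg (t * ·) (congrArg (u * ·) (congrArg (s * ·) (congrArg (t * ·) (congrArg (u * ·) (congrArg (s * ·) (congrArg (t * ·) (h4x _))))))))
  have ct : Commute ((s*t*u)^5) t := by
    unfold Commute SemiconjBy
    simp only [pow_succ, pow_zero, one_mul, mul_assoc]
    exact keyt.symm
  have cu : Commute ((s*t*u)^5) u := by
    unfold Commute SemiconjBy
    simp only [pow_succ, pow_zero, one_mul, mul_assoc]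
    exact keyu.symm
  have cstu : Commute ((s*t*u)^5) (s*t*u) := (Commute.refl (s*t*u)).pow_left 5
  have hs : s*t*u*u⁻¹*t⁻¹ = s := by group
  have cs : Commute ((s*t*u)^5) s := by
    have h := (cstu.mul_right cu.inv_right).mul_right ct.inv_right
    rwa [hs] at h
  exact ⟨cs, ct, cu⟩
end

section
/- In the group with generators s, t, u, v, w and relations sts = tst, tut = utu, uvu = vuv, wtw = twt, wuw = uwu, su = us, sv = vs, tv = vt, ws = sw, wv = vw, and tuwtuw = uwtuwt, the relation uwtuwt = wtuwtu also holds; i.e., the relation uwtuwt = wtuwtu is redundant in the presentation of the braid group of G₃₃. -/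
/-- In the group with generators s,t,u,v,w and the relations of the conjectured
presentation of the braid group of G₃₃ with only the single cyclic relation
tuwtuw = uwtuwt, the relation uwtuwt = wtuwtu also holds (it is redundant). -/
theorem G33_redundant_relation (G : Type*) [Group G] (s t u v w : G)
    (h1 : s*t*s = t*s*t)
    (h2 : t*u*t = u*t*u)
    (h3 : u*v*u = v*u*v)
    (h4 : w*t*w = t*w*t)
    (h5 : w*u*w = u*w*u)
    (h6 : s*u = u*s)
    (h7 : s*v = v*s)
    (h8 : t*v = v*t)
    (h9 : w*s = s*w)
    (h10 : w*v = v*w)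
    (h11 : t*u*w*t*u*w = u*w*t*u*w*t) :
    u*w*t*u*w*t = w*t*u*w*t*u := by
  have key : u*(t*u*w*t*u*w) = (t*u*w*t*u*w)*u := by
    calc u*(t*u*w*t*u*w) = (u*t*u)*(w*t*u*w) := by group
      _ = (t*u*t)*(w*t*u*w) := by rw [h2]
      _ = (t*u)*((t*w*t)*(u*w)) := by group
      _ = (t*u)*((w*t*w)*(u*w)) := by rw [h4]
      _ = (t*u*w*t)*(w*u*w) := by group
      _ = (t*u*w*t)*(u*w*u) := by rw [h5]
      _ = (t*u*w*t*u*w)*u := by group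
  calc u*w*t*u*w*t = t*u*w*t*u*w := h11.symm
    _ = u⁻¹*(u*(t*u*w*t*u*w)) := by group
    _ = u⁻¹*((t*u*w*t*u*w)*u) := by rw [key]
    _ = u⁻¹*(u*w*t*u*w*t*u) := by rw [h11]
    _ = w*t*u*w*t*u := by group
end

section
/- The highest-degree homogeneous part of the discriminant of G₃₁ is Δ∞ = −(4/27)x⁷z²t − (8/81)x⁶yz³, and its reduced form (radical) is, up to a nonzero scalar, x·z·(3xt + 2yz). -/
namespace G31Disc

open MvPolynomial

noncomputable section

abbrev R := MvPolynomial (Fin 4) ℚ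

def x : R := X 0
def y : R := X 1
def z : R := X 2
def t : R := X 3

/-- The matrix of basic derivations of G₃₁ (times 270). -/
def M : Matrix (Fin 4) (Fin 4) R :=
  !![2160*x, 3240*t*y, 5400*z + 2*x*y, 6480*t - 2*y^2;
     3240*y, 4860*t*x^2 - 26244000*z^2, -9720*t + 3*x^3, -11340*x*z - 3*x^2*y;
     5400*z, 16200*x*z^2 - 9720*t^2, -t*x - 5*y*z, t*y + 5*x^2*z;
     6480*t, -11340*t*x*z - 16200*y*z^2, -5*t*y - 2*x^2*z,
       2*x*y*z + 5*t*x^2 + 5400*z^2]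

/-- The discriminant of G₃₁: the determinant of the matrix of basic
derivations. -/
def Δ : R := C ((1 / 270 : ℚ)^4) * M.det

/-- The claimed highest-degree homogeneous part of Δ. -/
def Δinf : R := C (-(4:ℚ)/27) * x^7*z^2*t + C (-(8:ℚ)/81) * x^6*y*z^3

/-- The lower-degree part of Δ. -/
def A : R :=
  C (746496) * x^0*y^0*z^0*t^5 +
  C (777600000) * x^0*y^0*z^6*t^0 +
  C (-1728000) * x^0*y^1*z^3*t^2 +
  C (-384) * x^0*y^2*z^0*t^4 +
  C (-3110400) * x^1*y^0*z^2*t^3 +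
  C (800) * x^0*y^3*z^3*t^1 +
  C ((4:ℚ)/81) * x^0*y^4*z^0*t^3 +
  C (2160000) * x^1*y^1*z^5*t^0 +
  C (1120) * x^1*y^2*z^2*t^2 +
  C (2376000) * x^2*y^0*z^4*t^1 +
  C (-768) * x^2*y^1*z^1*t^3 +
  C (-384) * x^3*y^0*z^0*t^4 +
  C (-(8:ℚ)/81) * x^0*y^5*z^3*t^0 +
  C (-(4:ℚ)/27) * x^1*y^4*z^2*t^1 +
  C (1600) * x^2*y^2*z^4*t^0 +
  C (3040) * x^3*y^1*z^3*t^1 +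
  C (-(8:ℚ)/81) * x^3*y^2*z^0*t^3 +
  C (1184) * x^4*y^0*z^2*t^2 +
  C ((16:ℚ)/81) * x^3*y^3*z^3*t^0 +
  C ((8:ℚ)/27) * x^4*y^2*z^2*t^1 +
  C (-64) * x^5*y^0*z^4*t^0 +
  C ((4:ℚ)/81) * x^6*y^0*z^0*t^3

lemma td_le (c : ℚ) (a b e f : ℕ) :
    (C c * x^a*y^b*z^e*t^f : R).totalDegree ≤ a+b+e+f := by
  have h4 := totalDegree_mul (C c * x^a*y^b*z^e) (t^f)
  have h3 := totalDegree_mul (C c * x^a*y^b) (z^e)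
  have h2 := totalDegree_mul ((C c : R) * x^a) (y^b)
  have h1 := totalDegree_mul (C c : R) (x^a)
  simp only [x, y, z, t, totalDegree_X_pow, totalDegree_C, zero_add] at h1 h2 h3 h4 ⊢
  omega

lemma hA9 : A.totalDegree ≤ 9 := by
  unfold A
  repeat
    refine (totalDegree_add _ _).trans
      (max_le ?_ ((td_le _ _ _ _ _).trans (by norm_num)))
  exact (td_le _ _ _ _ _).trans (by norm_num)

set_option maxHeartbeats 1000000 in
lemma det4 (m : Matrix (Fin 4) (Fin 4) R) : m.det =
    m 0 0 * (m 1 1 * (m 2 2 * m 3 3 - m 2 3 * m 3 2)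
      - m 1 2 * (m 2 1 * m 3 3 - m 2 3 * m 3 1)
      + m 1 3 * (m 2 1 * m 3 2 - m 2 2 * m 3 1))
    - m 0 1 * (m 1 0 * (m 2 2 * m 3 3 - m 2 3 * m 3 2)
      - m 1 2 * (m 2 0 * m 3 3 - m 2 3 * m 3 0)
      + m 1 3 * (m 2 0 * m 3 2 - m 2 2 * m 3 0))
    + m 0 2 * (m 1 0 * (m 2 1 * m 3 3 - m 2 3 * m 3 1)
      - m 1 1 * (m 2 0 * m 3 3 - m 2 3 * m 3 0)
      + m 1 3 * (m 2 0 * m 3 1 - m 2 1 * m 3 0))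
    - m 0 3 * (m 1 0 * (m 2 1 * m 3 2 - m 2 2 * m 3 1)
      - m 1 1 * (m 2 0 * m 3 2 - m 2 2 * m 3 0)
      + m 1 2 * (m 2 0 * m 3 1 - m 2 1 * m 3 0)) := by
  simp [Matrix.det_succ_row_zero, Fin.sum_univ_succ,
    show Fin.succ (2:Fin 3) = 3 by rfl,
    show Fin.succAbove (2:Fin 4) (2:Fin 3) = 3 by rfl,
    show Fin.succAbove (1:Fin 4) (2:Fin 3) = 3 by rfl,
    show Fin.succAbove (3:Fin 4) (2:Fin 3) = 2 by rfl,
    show Fin.castSucc (2:Fin 3) = 2 by rfl]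
  ring

set_option maxHeartbeats 1000000 in
lemma hdet : M.det = C ((270:ℚ)^4) * (A + Δinf) := by
  rw [det4]
  simp only [M, Matrix.cons_val', Matrix.cons_val_zero, Matrix.cons_val_one,
    Matrix.head_cons, Matrix.head_fin_const, Matrix.empty_val',
    Matrix.cons_val_fin_one, Matrix.cons_val_two, Matrix.cons_val_three,
    Matrix.tail_cons, Matrix.of_apply]
  simp only [A, Δinf, mul_add, ← mul_assoc, ← C_mul]
  norm_num [x, y, z, t, map_ofNat, map_neg]
  ring

lemma hΔeq : Δ = A + Δinf := by
  rw [Δ, hdet, ← mul_assoc, ← C_mul]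
  norm_num

lemma hΔinf_ne : Δinf ≠ 0 := by
  intro h
  have h2 := congrArg (eval ![1, 0, 1, 1]) h
  simp [Δinf, x, y, z, t] at h2

lemma hΔinf_hom : Δinf.IsHomogeneous 10 := by
  have h1 : ((C (-(4:ℚ)/27) : R) * x^7*z^2*t).IsHomogeneous 10 := by
    unfold x z t
    have h10 : (10:ℕ) = 0+7+2+1 := by norm_num
    rw [h10]
    exact (((isHomogeneous_C (Fin 4) (-(4:ℚ)/27)).mul
      (isHomogeneous_X_pow (R := ℚ) 0 7)).mul
      (isHomogeneous_X_pow (R := ℚ) 2 2)).mul (isHomogeneous_X ℚ 3)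
  have h2 : ((C (-(8:ℚ)/81) : R) * x^6*y*z^3).IsHomogeneous 10 := by
    unfold x y z
    have h10 : (10:ℕ) = 0+6+1+3 := by norm_num
    rw [h10]
    exact (((isHomogeneous_C (Fin 4) (-(8:ℚ)/81)).mul
      (isHomogeneous_X_pow (R := ℚ) 0 6)).mul
      (isHomogeneous_X ℚ 1)).mul (isHomogeneous_X_pow (R := ℚ) 2 3)
  exact h1.add h2

lemma hcomp : homogeneousComponent 10 Δ = Δinf := by
  rw [hΔeq, map_add, homogeneousComponent_eq_zero 10 A (by
    have := hA9; omega), zero_add,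
    homogeneousComponent_of_mem ((mem_homogeneousSubmodule _ _).mpr hΔinf_hom),
    if_pos rfl]

lemma hfact : Δinf = C (-(4:ℚ)/81) * x^6 * z^2 * (3*x*t + 2*y*z) := by
  rw [Δinf, show (-(4:ℚ)/27) = (-(4:ℚ)/81) * 3 by norm_num,
    show (-(8:ℚ)/81) = (-(4:ℚ)/81) * 2 by norm_num, C_mul, C_mul,
    map_ofNat, map_ofNat]
  ring

/-- The highest-degree homogeneous part of the discriminant of G₃₁ is
Δ∞ = −(4/27)x⁷z²t − (8/81)x⁶yz³ = −(4/81)·x⁶z²·(3xt + 2yz); its radical is,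
up to a nonzero scalar, x·z·(3xt + 2yz): a prime divides Δ∞ iff it divides
x·z·(3xt + 2yz). -/
theorem discriminant_at_infinity :
    Δ.totalDegree = 10 ∧
    homogeneousComponent 10 Δ = Δinf ∧
    Δinf = C (-(4:ℚ)/81) * x^6 * z^2 * (3*x*t + 2*y*z) ∧
    (∀ p : R, Prime p → (p ∣ Δinf ↔ p ∣ x * z * (3*x*t + 2*y*z))) := by
  refine ⟨?_, hcomp, hfact, ?_⟩
  · have hle : Δ.totalDegree ≤ 10 := by
      rw [hΔeq]
      exact (totalDegree_add _ _).trans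
        (max_le (hA9.trans (by norm_num)) hΔinf_hom.totalDegree_le)
    have hge : 10 ≤ Δ.totalDegree := by
      by_contra h
      have h0 := homogeneousComponent_eq_zero 10 Δ (by omega)
      rw [hcomp] at h0
      exact hΔinf_ne h0
    omega
  · intro p hp
    have hu : IsUnit (C (-(4:ℚ)/81) : R) :=
      (isUnit_iff_ne_zero.mpr (by norm_num)).map C
    have h1 : p ∣ Δinf ↔ p ∣ x ∨ p ∣ z ∨ p ∣ (3*x*t + 2*y*z) := by
      rw [hfact, mul_assoc, mul_assoc, hu.dvd_mul_left, hp.dvd_mul,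
        hp.dvd_mul, hp.dvd_pow_iff_dvd (by norm_num),
        hp.dvd_pow_iff_dvd (by norm_num)]
    have h2 : p ∣ x * z * (3*x*t + 2*y*z) ↔
        p ∣ x ∨ p ∣ z ∨ p ∣ (3*x*t + 2*y*z) := by
      rw [mul_assoc, hp.dvd_mul, hp.dvd_mul]
    exact h1.trans h2.symm

end

end G31Disc
end
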